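/- Let L be a unimodular lattice and M, N mutually orthogonal primitive sublattices with N = M^⊥ and M = N^⊥. Given automorphisms σ_M of M and σ_N of N that induce the same automorphism on A_M ≅ A_N (under the natural gluing isomorphism), there exists an automorphism of L restricting to σ_M on M and σ_N on N. -/

import Mathlib

/-- The dual lattice of a `ℤ`-lattice `M` in a rational quadratic space `(V, B)`:
elements of the `ℚ`-span of `M` pairing integrally with `M`, as an additive subgroup. -/
def dualSub {V : Type*} [AddCommGroup V] [Module ℚ V]
    (B : V →ₗ[ℚ] V →ₗ[ℚ] ℚ) (M : Submodule ℤ V) : AddSubgroup V where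
  carrier := {x | x ∈ Submodule.span ℚ (M : Set V) ∧ ∀ m ∈ M, ∃ n : ℤ, B x m = (n : ℚ)}
  zero_mem' := ⟨zero_mem _, fun m _ => ⟨0, by simp⟩⟩
  add_mem' := by
    rintro x y ⟨hx1, hx2⟩ ⟨hy1, hy2⟩
    refine ⟨add_mem hx1 hy1, fun m hm => ?_⟩
    obtain ⟨a, ha⟩ := hx2 m hm
    obtain ⟨b, hb⟩ := hy2 m hm
    exact ⟨a + b, by rw [map_add, LinearMap.add_apply, ha, hb]; push_cast; ring⟩
  neg_mem' := by
    rintro x ⟨hx1, hx2⟩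
    refine ⟨neg_mem hx1, fun m hm => ?_⟩
    obtain ⟨a, ha⟩ := hx2 m hm
    exact ⟨-a, by rw [map_neg, LinearMap.neg_apply, ha]; push_cast; ring⟩

/-! On `V = ℚM ⊕ ℚN` put `F := σM ⊕ σN`; it is an isometry of `V` because the two summands are
orthogonal. A vector `z ∈ L` splits as `x + y` with `x ∈ M*` and `y ∈ N*`, and the gluing condition
says exactly that `F z = σM x + σN y` lies in `L` again. Finally `F⁻¹ L ⊆ L` by unimodularity, since
`B (F⁻¹ z) m = B z (F m)` is an integer for all `m ∈ L`. -/

namespace LinearMap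

variable {R M N P : Type*} [CommRing R] [AddCommGroup M] [Module R M] [AddCommGroup N] [Module R N]
  [AddCommGroup P] [Module R P]

theorem eqOn_span₂ {f g : M →ₗ[R] N →ₗ[R] P} {s : Set M} {t : Set N}
    (h : ∀ x ∈ s, ∀ y ∈ t, f x y = g x y) {x : M} (hx : x ∈ Submodule.span R s) {y : N}
    (hy : y ∈ Submodule.span R t) : f x y = g x y :=
  eqOn_span (f := f.flip y) (g := g.flip y) (fun x' hx' => eqOn_span (h x' hx') hy) hx

end LinearMap

theorem Submodule.map_span_eq_of_map_restrictScalars {R S V : Type*} [CommRing R] [CommRing S]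
    [Algebra R S] [AddCommGroup V] [Module R V] [Module S V] [IsScalarTower R S V]
    (f : V →ₗ[S] V) (M : Submodule R V) (h : M.map (f.restrictScalars R) = M) :
    (span S (M : Set V)).map f = span S (M : Set V) := by
  rw [map_span]
  nth_rw 2 [← h]
  rfl

namespace LinearEquiv

section Ring

variable {R E : Type*} [Ring R] [AddCommGroup E] [Module R E] {p q : Submodule R E}

noncomputable def ofIsCompl (h : IsCompl p q) (σ τ : E ≃ₗ[R] E) (hσ : p.map (σ : E →ₗ[R] E) = p)
    (hτ : q.map (τ : E →ₗ[R] E) = q) : E ≃ₗ[R] E :=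
  (p.prodEquivOfIsCompl q h).symm ≪≫ₗ ((σ.ofSubmodules p p hσ).prodCongr (τ.ofSubmodules q q hτ))
    ≪≫ₗ p.prodEquivOfIsCompl q h

variable (h : IsCompl p q) {σ τ : E ≃ₗ[R] E} (hσ : p.map (σ : E →ₗ[R] E) = p)
  (hτ : q.map (τ : E →ₗ[R] E) = q)

theorem ofIsCompl_apply_add {a b : E} (ha : a ∈ p) (hb : b ∈ q) :
    ofIsCompl h σ τ hσ hτ (a + b) = σ a + τ b := by
  have hsplit : (p.prodEquivOfIsCompl q h).symm (a + b) = (⟨a, ha⟩, ⟨b, hb⟩) :=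
    (p.prodEquivOfIsCompl q h).symm_apply_eq.2 rfl
  simp [ofIsCompl, hsplit]

theorem ofIsCompl_apply_left {a : E} (ha : a ∈ p) : ofIsCompl h σ τ hσ hτ a = σ a := by
  simpa using ofIsCompl_apply_add h hσ hτ ha q.zero_mem

theorem ofIsCompl_apply_right {b : E} (hb : b ∈ q) : ofIsCompl h σ τ hσ hτ b = τ b := by
  simpa using ofIsCompl_apply_add h hσ hτ p.zero_mem hb

end Ring

section Bilinear

variable {R E P : Type*} [CommRing R] [AddCommGroup E] [Module R E] [AddCommGroup P] [Module R P]
  {p q : Submodule R E} (h : IsCompl p q) {σ τ : E ≃ₗ[R] E} (hσ : p.map (σ : E →ₗ[R] E) = p)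
  (hτ : q.map (τ : E →ₗ[R] E) = q)

theorem ofIsCompl_isometry {B : E →ₗ[R] E →ₗ[R] P} (hpq : ∀ a ∈ p, ∀ b ∈ q, B a b = 0)
    (hqp : ∀ b ∈ q, ∀ a ∈ p, B b a = 0) (hσB : ∀ a ∈ p, ∀ a' ∈ p, B (σ a) (σ a') = B a a')
    (hτB : ∀ b ∈ q, ∀ b' ∈ q, B (τ b) (τ b') = B b b') (v w : E) :
    B (ofIsCompl h σ τ hσ hτ v) (ofIsCompl h σ τ hσ hτ w) = B v w := by
  obtain ⟨a, b, ha, hb, rfl⟩ := Submodule.codisjoint_iff_exists_add_eq.1 h.codisjoint v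
  obtain ⟨a', b', ha', hb', rfl⟩ := Submodule.codisjoint_iff_exists_add_eq.1 h.codisjoint w
  have hσa : σ a ∈ p := hσ ▸ Submodule.mem_map_of_mem ha
  have hσa' : σ a' ∈ p := hσ ▸ Submodule.mem_map_of_mem ha'
  have hτb : τ b ∈ q := hτ ▸ Submodule.mem_map_of_mem hb
  have hτb' : τ b' ∈ q := hτ ▸ Submodule.mem_map_of_mem hb'
  simp only [ofIsCompl_apply_add h hσ hτ ha hb, ofIsCompl_apply_add h hσ hτ ha' hb', map_add,
    LinearMap.add_apply, hσB a ha a' ha', hτB b hb b' hb', hpq _ hσa _ hτb', hqp _ hτb _ hσa',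
    hpq _ ha _ hb', hqp _ hb _ ha']

end Bilinear

end LinearEquiv

section Lattice

variable {V : Type*} [AddCommGroup V] [Module ℚ V] {B : V →ₗ[ℚ] V →ₗ[ℚ] ℚ} {L : Submodule ℤ V}

theorem mem_dualSub_of_add_mem (hLint : ∀ x ∈ L, ∀ y ∈ L, ∃ n : ℤ, B x y = (n : ℚ))
    {M : Submodule ℤ V} (hML : M ≤ L) {a b : V} (ha : a ∈ Submodule.span ℚ (M : Set V))
    (hb : ∀ m ∈ M, B b m = 0) (hab : a + b ∈ L) : a ∈ dualSub B M := by
  refine ⟨ha, fun m hm => ?_⟩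
  obtain ⟨n, hn⟩ := hLint _ hab m (hML hm)
  exact ⟨n, by simpa [hb m hm] using hn⟩

theorem map_eq_self_of_isometry (hLint : ∀ x ∈ L, ∀ y ∈ L, ∃ n : ℤ, B x y = (n : ℚ))
    (hLuni : ∀ x : V, (∀ m ∈ L, ∃ n : ℤ, B x m = (n : ℚ)) → x ∈ L) (F : V ≃ₗ[ℚ] V)
    (hF : ∀ v w, B (F v) (F w) = B v w) (hFL : ∀ z ∈ L, F z ∈ L) :
    L.map ((F : V →ₗ[ℚ] V).restrictScalars ℤ) = L := by
  refine le_antisymm (Submodule.map_le_iff_le_comap.2 hFL) fun x hx => ⟨F.symm x, ?_, by simp⟩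
  refine hLuni _ fun m hm => ?_
  have hadj : B (F.symm x) m = B x (F m) := by simpa using (hF (F.symm x) m).symm
  exact hadj ▸ hLint x hx _ (hFL m hm)

end Lattice

theorem stmt_12_general {V : Type*} [AddCommGroup V] [Module ℚ V]
    (B : V →ₗ[ℚ] V →ₗ[ℚ] ℚ) (hsymm : ∀ v w, B v w = B w v)
    (L M N : Submodule ℤ V)
    (hLint : ∀ x ∈ L, ∀ y ∈ L, ∃ n : ℤ, B x y = (n : ℚ))
    (hLuni : ∀ x : V, (∀ m ∈ L, ∃ n : ℤ, B x m = (n : ℚ)) → x ∈ L)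
    (hML : M ≤ L) (hNL : N ≤ L)
    (horth : ∀ m ∈ M, ∀ n ∈ N, B m n = 0)
    (hcompl : IsCompl (Submodule.span ℚ (M : Set V)) (Submodule.span ℚ (N : Set V)))
    (σM σN : V ≃ₗ[ℚ] V)
    (hσM : Submodule.map ((σM : V →ₗ[ℚ] V).restrictScalars ℤ) M = M)
    (hσN : Submodule.map ((σN : V →ₗ[ℚ] V).restrictScalars ℤ) N = N)
    (hσMiso : ∀ m ∈ M, ∀ m' ∈ M, B (σM m) (σM m') = B m m')
    (hσNiso : ∀ n ∈ N, ∀ n' ∈ N, B (σN n) (σN n') = B n n')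
    (hglue : ∀ x ∈ dualSub B M, ∀ y ∈ dualSub B N, x + y ∈ L → σM x + σN y ∈ L) :
    ∃ F : V ≃ₗ[ℚ] V,
      Submodule.map ((F : V →ₗ[ℚ] V).restrictScalars ℤ) L = L ∧
      (∀ z ∈ L, ∀ w ∈ L, B (F z) (F w) = B z w) ∧
      (∀ m ∈ M, F m = σM m) ∧ (∀ n ∈ N, F n = σN n) := by
  have hMN : ∀ a ∈ Submodule.span ℚ (M : Set V), ∀ b ∈ Submodule.span ℚ (N : Set V),
      B a b = 0 :=
    fun a ha b hb => LinearMap.eqOn_span₂ (g := 0) horth ha hb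
  have hNM : ∀ b ∈ Submodule.span ℚ (N : Set V), ∀ a ∈ Submodule.span ℚ (M : Set V),
      B b a = 0 :=
    fun b hb a ha => hsymm b a ▸ hMN a ha b hb
  let F := LinearEquiv.ofIsCompl hcompl σM σN
    (Submodule.map_span_eq_of_map_restrictScalars _ M hσM)
    (Submodule.map_span_eq_of_map_restrictScalars _ N hσN)
  have hFiso : ∀ v w, B (F v) (F w) = B v w :=
    LinearEquiv.ofIsCompl_isometry _ _ _ hMN hNM
      (fun a ha a' ha' =>
        LinearMap.eqOn_span₂ (f := B.compl₁₂ σM.toLinearMap σM.toLinearMap) hσMiso ha ha')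
      (fun b hb b' hb' =>
        LinearMap.eqOn_span₂ (f := B.compl₁₂ σN.toLinearMap σN.toLinearMap) hσNiso hb hb')
  have hFL : ∀ z ∈ L, F z ∈ L := by
    intro z hz
    obtain ⟨a, b, ha, hb, rfl⟩ := Submodule.codisjoint_iff_exists_add_eq.1 hcompl.codisjoint z
    rw [LinearEquiv.ofIsCompl_apply_add _ _ _ ha hb]
    refine hglue a (mem_dualSub_of_add_mem hLint hML ha ?_ hz) b
      (mem_dualSub_of_add_mem hLint hNL hb ?_ (add_comm a b ▸ hz)) hz
    · exact fun m hm => hNM b hb m (Submodule.subset_span hm)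
    · exact fun n hn => hMN a ha n (Submodule.subset_span hn)
  exact ⟨F, map_eq_self_of_isometry hLint hLuni F hFiso hFL, fun z _ w _ => hFiso z w,
    fun m hm => LinearEquiv.ofIsCompl_apply_left _ _ _ (Submodule.subset_span hm),
    fun n hn => LinearEquiv.ofIsCompl_apply_right _ _ _ (Submodule.subset_span hn)⟩

/-- Nikulin's gluing of automorphisms: let `L` be a unimodular lattice and `M, N` mutually
orthogonal primitive sublattices with `N = M^⊥`, `M = N^⊥`. Given isometries `σM` of `M`
and `σN` of `N` inducing the same automorphism on `A_M ≅ A_N` under the gluing isomorphism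
(i.e. `x + y ∈ L → σM x + σN y ∈ L` for `x ∈ M*`, `y ∈ N*`), there is an automorphism of
`L` restricting to `σM` on `M` and to `σN` on `N`. -/
theorem stmt_12 {V : Type*} [AddCommGroup V] [Module ℚ V]
    (B : V →ₗ[ℚ] V →ₗ[ℚ] ℚ) (hsymm : ∀ v w, B v w = B w v)
    (hnd : ∀ v : V, (∀ w, B v w = 0) → v = 0)
    (L M N : Submodule ℤ V)
    (hspan : Submodule.span ℚ (L : Set V) = ⊤)
    (hLint : ∀ x ∈ L, ∀ y ∈ L, ∃ n : ℤ, B x y = (n : ℚ))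
    (hLuni : ∀ x : V, (∀ m ∈ L, ∃ n : ℤ, B x m = (n : ℚ)) → x ∈ L)
    (hML : M ≤ L) (hNL : N ≤ L)
    (horth : ∀ m ∈ M, ∀ n ∈ N, B m n = 0)
    (hMperp : ∀ x ∈ L, (∀ n ∈ N, B x n = 0) → x ∈ M)
    (hNperp : ∀ x ∈ L, (∀ m ∈ M, B x m = 0) → x ∈ N)
    (hcompl : IsCompl (Submodule.span ℚ (M : Set V)) (Submodule.span ℚ (N : Set V)))
    (σM σN : V ≃ₗ[ℚ] V)
    (hσM : Submodule.map ((σM : V →ₗ[ℚ] V).restrictScalars ℤ) M = M)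
    (hσN : Submodule.map ((σN : V →ₗ[ℚ] V).restrictScalars ℤ) N = N)
    (hσMiso : ∀ m ∈ M, ∀ m' ∈ M, B (σM m) (σM m') = B m m')
    (hσNiso : ∀ n ∈ N, ∀ n' ∈ N, B (σN n) (σN n') = B n n')
    (hglue : ∀ x ∈ dualSub B M, ∀ y ∈ dualSub B N, x + y ∈ L → σM x + σN y ∈ L) :
    ∃ F : V ≃ₗ[ℚ] V,
      Submodule.map ((F : V →ₗ[ℚ] V).restrictScalars ℤ) L = L ∧
      (∀ z ∈ L, ∀ w ∈ L, B (F z) (F w) = B z w) ∧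
      (∀ m ∈ M, F m = σM m) ∧ (∀ n ∈ N, F n = σN n) :=
  stmt_12_general B hsymm L M N hLint hLuni hML hNL horth hcompl σM σN hσM hσN hσMiso hσNiso hglue
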